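/- arXiv:math/0408038 — 7 statements merged into one kernel-verified Lean document; each statement's English description precedes it below -/
import Mathlib

section
/- Let n, d be positive integers and let a_1 ≤ a_2 ≤ … ≤ a_n be integers with 1 ≤ a_i ≤ d for all i and a_1 + … + a_n > d. For every integer i ≥ 0, the number of tuples (α_1, …, α_n) of non-negative integers satisfying α_1 + … + α_n = i·d and α_j ≤ i·a_j for all j equals Σ_{S ∈ 𝒮} (−1)^{|S|} · C(i(d − ΣS) − |S| + n − 1, n − 1). -/
open Finset

/-- Binomial coefficient `C(m, k)` for an integer top entry `m`, with the convention
that it vanishes whenever `m < k` (in particular whenever `m < 0`). -/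
def ichoose (m : ℤ) (k : ℕ) : ℤ := if m < (k : ℤ) then 0 else (m.toNat).choose k

namespace VeroneseAux

/-- The fiber of `α ↦ α 0` over `j` in `antidiagonalTuple (k+1) n` has the same cardinality
as `antidiagonalTuple k (n - j)`. -/
lemma card_fiber (k n j : ℕ) (hj : j ≤ n) :
    ((Finset.Nat.antidiagonalTuple (k + 1) n).filter (fun α => α 0 = j)).card
      = (Finset.Nat.antidiagonalTuple k (n - j)).card := by
  refine Finset.card_bij' (fun α _ => Fin.tail α) (fun β _ => Fin.cons j β) ?_ ?_ ?_ ?_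
  · intro α hα
    rw [Finset.mem_filter, Finset.Nat.mem_antidiagonalTuple] at hα
    rw [Finset.Nat.mem_antidiagonalTuple]
    have h := hα.1
    rw [Fin.sum_univ_succ] at h
    have h2 : ∑ i, Fin.tail α i = ∑ i : Fin k, α i.succ := rfl
    rw [h2]
    omega
  · intro β hβ
    rw [Finset.Nat.mem_antidiagonalTuple] at hβ
    rw [Finset.mem_filter, Finset.Nat.mem_antidiagonalTuple]
    constructor
    · rw [Fin.sum_univ_succ]
      simp only [Fin.cons_zero, Fin.cons_succ]
      omega
    · simp
  · intro α hα
    rw [Finset.mem_filter] at hα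
    obtain ⟨-, rfl⟩ := hα
    exact Fin.cons_self_tail α
  · intro β _
    simp

/-- Stars and bars: the number of `(k+1)`-tuples of naturals summing to `n`. -/
lemma card_antidiagonalTuple (k : ℕ) :
    ∀ n, (Finset.Nat.antidiagonalTuple (k + 1) n).card = (n + k).choose k := by
  induction k with
  | zero => intro n; rw [Finset.Nat.antidiagonalTuple_one]; simp
  | succ k ih =>
    intro n
    have hmaps : ∀ α ∈ Finset.Nat.antidiagonalTuple (k + 2) n,
        (fun α : Fin (k + 2) → ℕ => α 0) α ∈ Finset.range (n + 1) := by
      intro α hα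
      rw [Finset.Nat.mem_antidiagonalTuple] at hα
      rw [Finset.mem_range, Nat.lt_succ_iff, ← hα]
      exact Finset.single_le_sum (f := α) (fun i _ => Nat.zero_le _) (Finset.mem_univ 0)
    rw [Finset.card_eq_sum_card_fiberwise hmaps]
    have : ∀ j ∈ Finset.range (n + 1),
        ((Finset.Nat.antidiagonalTuple (k + 2) n).filter (fun α => α 0 = j)).card
          = (n - j + k).choose k := by
      intro j hj
      rw [Finset.mem_range, Nat.lt_succ_iff] at hj
      rw [card_fiber (k + 1) n j hj, ih (n - j)]
    rw [Finset.sum_congr rfl this, ← Finset.sum_range_reflect]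
    have : ∀ j ∈ Finset.range (n + 1),
        (n - (n + 1 - 1 - j) + k).choose k = (j + k).choose k := by
      intro j hj
      rw [Finset.mem_range, Nat.lt_succ_iff] at hj
      congr 2
      omega
    rw [Finset.sum_congr rfl this, Nat.sum_range_add_choose]
    rfl

/-- Counting tuples with fixed sum and lower bounds on a subset of coordinates. -/
lemma card_lower (n m : ℕ) (b : Fin n → ℕ) (S : Finset (Fin n)) :
    ((Finset.Nat.antidiagonalTuple n m).filter (fun α => ∀ j ∈ S, b j < α j)).card
      = if (∑ j ∈ S, (b j + 1)) ≤ m then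
          (Finset.Nat.antidiagonalTuple n (m - ∑ j ∈ S, (b j + 1))).card
        else 0 := by
  set c : Fin n → ℕ := fun j => if j ∈ S then b j + 1 else 0 with hc
  have hcsum : ∑ j, c j = ∑ j ∈ S, (b j + 1) := by
    rw [hc, Finset.sum_ite_mem, Finset.univ_inter]
  split_ifs with hle
  · refine Finset.card_bij' (fun α _ => fun j => α j - c j) (fun β _ => fun j => β j + c j)
      ?_ ?_ ?_ ?_
    · intro α hα
      rw [Finset.mem_filter, Finset.Nat.mem_antidiagonalTuple] at hα
      rw [Finset.Nat.mem_antidiagonalTuple]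
      have hcle : ∀ j ∈ Finset.univ, c j ≤ α j := by
        intro j _
        by_cases h : j ∈ S
        · simpa [hc, h] using hα.2 j h
        · simp [hc, h]
      rw [Finset.sum_tsub_distrib _ hcle, hα.1, hcsum]
    · intro β hβ
      rw [Finset.Nat.mem_antidiagonalTuple] at hβ
      rw [Finset.mem_filter, Finset.Nat.mem_antidiagonalTuple]
      dsimp only
      constructor
      · rw [Finset.sum_add_distrib, hβ, hcsum]
        omega
      · intro j hj
        have : c j = b j + 1 := by simp [hc, hj]
        omega
    · intro α hα
      rw [Finset.mem_filter] at hα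
      funext j
      dsimp only
      have : c j ≤ α j := by
        by_cases h : j ∈ S
        · simpa [hc, h] using hα.2 j h
        · simp [hc, h]
      omega
    · intro β _
      funext j
      dsimp only
      omega
  · rw [Finset.card_eq_zero, Finset.filter_eq_empty_iff]
    intro α hα hforall
    rw [Finset.Nat.mem_antidiagonalTuple] at hα
    apply hle
    rw [← hcsum, ← hα]
    apply Finset.sum_le_sum
    intro j _
    by_cases h : j ∈ S
    · simpa [hc, h] using hforall j h
    · simp [hc, h]

/-- Inclusion–exclusion for the upper-bound constrained count. -/
lemma incl_excl (n m : ℕ) (b : Fin n → ℕ) :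
    (((Finset.Nat.antidiagonalTuple n m).filter (fun α => ∀ j, α j ≤ b j)).card : ℤ)
      = ∑ S ∈ (Finset.univ : Finset (Fin n)).powerset, (-1 : ℤ) ^ S.card *
          (((Finset.Nat.antidiagonalTuple n m).filter (fun α => ∀ j ∈ S, b j < α j)).card : ℤ) := by
  have key : ∀ S : Finset (Fin n),
      (((Finset.Nat.antidiagonalTuple n m).filter (fun α => ∀ j ∈ S, b j < α j)).card : ℤ)
        = ∑ α ∈ Finset.Nat.antidiagonalTuple n m,
            (if ∀ j ∈ S, b j < α j then (1 : ℤ) else 0) := by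
    intro S
    rw [Finset.card_filter]
    push_cast
    simp [apply_ite]
  rw [Finset.sum_congr rfl (fun S _ => by rw [key S, Finset.mul_sum]), Finset.sum_comm]
  have step : ∀ α ∈ Finset.Nat.antidiagonalTuple n m,
      (∑ S ∈ (Finset.univ : Finset (Fin n)).powerset,
        (-1 : ℤ) ^ S.card * (if ∀ j ∈ S, b j < α j then (1 : ℤ) else 0))
        = (if ∀ j, α j ≤ b j then (1 : ℤ) else 0) := by
    intro α _
    set T : Finset (Fin n) := Finset.univ.filter (fun j => b j < α j) with hT
    have hiff : ∀ S : Finset (Fin n), (∀ j ∈ S, b j < α j) ↔ S ⊆ T := by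
      intro S
      constructor
      · intro h j hj
        rw [hT, Finset.mem_filter]
        exact ⟨Finset.mem_univ j, h j hj⟩
      · intro h j hj
        have := h hj
        rw [hT, Finset.mem_filter] at this
        exact this.2
    have : ∀ S ∈ (Finset.univ : Finset (Fin n)).powerset,
        (-1 : ℤ) ^ S.card * (if ∀ j ∈ S, b j < α j then (1 : ℤ) else 0)
          = if S ⊆ T then (-1 : ℤ) ^ S.card else 0 := by
      intro S _
      rw [if_congr (hiff S) rfl rfl]
      split_ifs <;> ring
    rw [Finset.sum_congr rfl this, Finset.sum_ite, Finset.sum_const_zero, add_zero]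
    have hpow : (Finset.univ : Finset (Fin n)).powerset.filter (fun S => S ⊆ T)
        = T.powerset := by
      ext S
      simp [Finset.mem_powerset, Finset.subset_univ]
    rw [hpow, Finset.sum_powerset_neg_one_pow_card]
    congr 1
    rw [eq_iff_iff, hT, Finset.filter_eq_empty_iff]
    simp [Nat.not_lt]
  rw [Finset.sum_congr rfl step, Finset.card_filter]
  push_cast
  simp [apply_ite]

/-- Stars and bars, general positive length. -/
lemma card_antidiagonalTuple' (n M : ℕ) (hn : 0 < n) :
    (Finset.Nat.antidiagonalTuple n M).card = (M + (n - 1)).choose (n - 1) := by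
  obtain ⟨k, rfl⟩ : ∃ k, n = k + 1 := ⟨n - 1, by omega⟩
  rw [card_antidiagonalTuple]
  simp

end VeroneseAux

/-- The Hilbert function of the algebra of Veronese type `𝒱(a₁,…,aₙ; d)`:
the number of tuples `(α₁,…,αₙ)` of non-negative integers with `Σ αⱼ = i·d` and
`αⱼ ≤ i·aⱼ` equals `Σ_{S ∈ 𝒮} (−1)^{|S|} C(i(d − ΣS) − |S| + n − 1, n − 1)`,
where `𝒮` consists of all subsets `S` of `{1,…,n}` with `ΣS := Σ_{j ∈ S} aⱼ < d`. -/
theorem hilbert_function_veronese_type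
    (n d : ℕ) (hn : 0 < n) (hd : 0 < d) (a : Fin n → ℕ)
    (hmono : Monotone a) (h1 : ∀ j, 1 ≤ a j) (hle : ∀ j, a j ≤ d)
    (hsum : d < ∑ j, a j) (i : ℕ) :
    ((Finset.filter (fun α : Fin n → ℕ => ∑ j, α j = i * d)
        (Fintype.piFinset fun j => Finset.range (i * a j + 1))).card : ℤ) =
      ∑ S ∈ Finset.univ.powerset.filter (fun S : Finset (Fin n) => ∑ j ∈ S, a j < d),
        (-1 : ℤ) ^ S.card *
          ichoose ((i : ℤ) * ((d : ℤ) - ∑ j ∈ S, (a j : ℤ)) - S.card + n - 1) (n - 1) := by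
  set m := i * d with hm
  set b : Fin n → ℕ := fun j => i * a j with hb
  -- identify the left-hand side with a filter of the antidiagonal tuples
  have hLHS : (Finset.filter (fun α : Fin n → ℕ => ∑ j, α j = m)
        (Fintype.piFinset fun j => Finset.range (b j + 1)))
      = (Finset.Nat.antidiagonalTuple n m).filter (fun α => ∀ j, α j ≤ b j) := by
    ext α
    simp only [Finset.mem_filter, Fintype.mem_piFinset, Finset.mem_range, Nat.lt_succ_iff,
      Finset.Nat.mem_antidiagonalTuple]
    tauto
  rw [hLHS, VeroneseAux.incl_excl n m b]
  -- value of each term via the lower-bound count and stars-and-bars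
  have hterm : ∀ S : Finset (Fin n),
      (((Finset.Nat.antidiagonalTuple n m).filter (fun α => ∀ j ∈ S, b j < α j)).card : ℤ)
        = ichoose ((i : ℤ) * ((d : ℤ) - ∑ j ∈ S, (a j : ℤ)) - S.card + n - 1) (n - 1) := by
    intro S
    have hcS : ∑ j ∈ S, (b j + 1) = i * (∑ j ∈ S, a j) + S.card := by
      rw [Finset.sum_add_distrib, Finset.sum_const, smul_eq_mul, mul_one, hb, Finset.mul_sum]
    have htop : (i : ℤ) * ((d : ℤ) - ∑ j ∈ S, (a j : ℤ)) - S.card + n - 1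
        = (m : ℤ) - (∑ j ∈ S, (b j + 1) : ℕ) + n - 1 := by
      push_cast [hcS, hm]
      ring
    rw [VeroneseAux.card_lower n m b S, htop]
    split_ifs with hle'
    · rw [VeroneseAux.card_antidiagonalTuple' n (m - ∑ j ∈ S, (b j + 1)) hn]
      rw [ichoose, if_neg (by omega)]
      have htn : ((m : ℤ) - ((∑ j ∈ S, (b j + 1) : ℕ) : ℤ) + n - 1).toNat
          = m - ∑ j ∈ S, (b j + 1) + (n - 1) := by omega
      rw [htn]
    · rw [ichoose, if_pos (by omega)]
      simp
  have h2 : ∑ S ∈ (Finset.univ : Finset (Fin n)).powerset, (-1 : ℤ) ^ S.card *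
        (((Finset.Nat.antidiagonalTuple n m).filter (fun α => ∀ j ∈ S, b j < α j)).card : ℤ)
      = ∑ S ∈ (Finset.univ : Finset (Fin n)).powerset, (-1 : ℤ) ^ S.card *
          ichoose ((i : ℤ) * ((d : ℤ) - ∑ j ∈ S, (a j : ℤ)) - S.card + n - 1) (n - 1) :=
    Finset.sum_congr rfl (fun S _ => by rw [hterm S])
  rw [h2]
  refine (Finset.sum_filter_of_ne ?_).symm
  intro S _ hne
  show ∑ j ∈ S, a j < d
  by_contra hge
  apply hne
  rw [mul_eq_zero]
  right
  have hcast : (∑ j ∈ S, ((a j : ℤ))) = ((∑ j ∈ S, a j : ℕ) : ℤ) := by push_cast; ring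
  rw [ichoose, hcast]
  have hd2 : (d : ℤ) - ((∑ j ∈ S, a j : ℕ) : ℤ) ≤ 0 := by
    clear hne hterm h2 hLHS hb hm
    omega
  have hi0 : (i : ℤ) * ((d : ℤ) - ((∑ j ∈ S, a j : ℕ) : ℤ)) ≤ 0 :=
    mul_nonpos_of_nonneg_of_nonpos (by positivity) hd2
  have hSne : S.Nonempty := by
    rw [Finset.nonempty_iff_ne_empty]
    intro hS
    rw [hS, Finset.sum_empty] at hge
    clear hne hterm h2 hLHS hb hm
    omega
  have hcard := Finset.card_pos.mpr hSne
  rw [if_pos (by clear hne hterm h2 hLHS hb hm; omega)]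
end

section
/- Let n > d ≥ 1 be integers. For every integer i ≥ 0, the number of tuples (α_1, …, α_n) of non-negative integers satisfying α_1 + … + α_n = i·d and α_j ≤ i for all j equals Σ_{s=0}^{d−1} (−1)^s · C(n, s) · C(i(d − s) − s + n − 1, n − 1). -/
open Finset

lemma stars_bars (n t : ℕ) (hn : 1 ≤ n) :
    ((Fintype.piFinset fun _ : Fin n => Finset.range (t + 1)).filter
        (fun P : Fin n → ℕ => ∑ j, P j = t)).card = (t + n - 1).choose (n - 1) := by
  have h2 : (n + t - 1).choose t = (t + n - 1).choose (n - 1) := by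
    rw [Nat.add_comm n t, ← Nat.choose_symm (show n - 1 ≤ t + n - 1 by omega)]
    congr 1
    omega
  have h1 : ((Fintype.piFinset fun _ : Fin n => Finset.range (t + 1)).filter
        (fun P : Fin n → ℕ => ∑ j, P j = t)).card
      = Nat.card {P : Fin n → ℕ // ∑ j, P j = t} := by
    rw [← Nat.card_eq_finsetCard]
    apply Nat.card_congr
    apply Equiv.subtypeEquivRight
    intro P
    simp only [mem_filter, Fintype.mem_piFinset, mem_range, Nat.lt_succ_iff]
    constructor
    · exact fun h => h.2
    · intro h
      exact ⟨fun j => h ▸ Finset.single_le_sum (fun _ _ => Nat.zero_le _) (mem_univ j), h⟩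
  rw [h1, ← Nat.card_congr (Sym.equivNatSumOfFintype (Fin n) t), Nat.card_eq_fintype_card,
    Sym.card_sym_eq_choose, Fintype.card_fin, h2]

lemma shift_count (n i m : ℕ) (S : Finset (Fin n)) (hsm : S.card * (i + 1) ≤ m) :
    (((Fintype.piFinset fun _ : Fin n => Finset.range (m + 1)).filter
        (fun α : Fin n → ℕ => ∑ j, α j = m)).filter
      (fun α => ∀ j ∈ S, i + 1 ≤ α j)).card
    = ((Fintype.piFinset fun _ : Fin n => Finset.range (m - S.card * (i + 1) + 1)).filter
        (fun P : Fin n → ℕ => ∑ j, P j = m - S.card * (i + 1))).card := by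
  set t := m - S.card * (i + 1) with htdef
  set c : Fin n → ℕ := fun j => if j ∈ S then i + 1 else 0 with hc
  have hcsum : ∑ j, c j = S.card * (i + 1) := by
    rw [hc]
    rw [Finset.sum_ite_mem, Finset.univ_inter, Finset.sum_const, smul_eq_mul]
  set g : (Fin n → ℕ) → (Fin n → ℕ) := fun β j => β j + c j with hg
  have hginj : Function.Injective g := by
    intro a b hab
    funext j
    have := congrFun hab j
    simp only [hg] at this
    omega
  have himg : (((Fintype.piFinset fun _ : Fin n => Finset.range (m + 1)).filter
        (fun α : Fin n → ℕ => ∑ j, α j = m)).filter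
      (fun α => ∀ j ∈ S, i + 1 ≤ α j))
      = ((Fintype.piFinset fun _ : Fin n => Finset.range (t + 1)).filter
        (fun P : Fin n → ℕ => ∑ j, P j = t)).image g := by
    ext α
    simp only [mem_image, mem_filter, Fintype.mem_piFinset, mem_range, Nat.lt_succ_iff]
    constructor
    · rintro ⟨⟨hbd, hsum⟩, hge⟩
      have hcle : ∀ j, c j ≤ α j := by
        intro j
        by_cases hj : j ∈ S
        · simpa [hc, hj] using hge j hj
        · simp [hc, hj]
      have h2 : ∑ j, (α j - c j) + ∑ j, c j = ∑ j, α j := by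
        rw [← Finset.sum_add_distrib]
        exact Finset.sum_congr rfl fun j _ => by have := hcle j; omega
      have hs : ∑ j, (α j - c j) = t := by omega
      refine ⟨fun j => α j - c j, ⟨fun j => ?_, hs⟩, ?_⟩
      · show α j - c j ≤ t
        calc α j - c j ≤ ∑ k, (α k - c k) :=
              Finset.single_le_sum (f := fun k => α k - c k)
                (fun _ _ => Nat.zero_le _) (mem_univ j)
          _ = t := hs
      · funext j
        simp only [hg]
        have := hcle j
        omega
    · rintro ⟨β, ⟨hbd, hsum⟩, rfl⟩
      have hgsum : ∑ j, g β j = m := by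
        simp only [hg]
        rw [Finset.sum_add_distrib, hsum, hcsum]
        omega
      refine ⟨⟨fun j => ?_, hgsum⟩, fun j hj => ?_⟩
      · calc g β j ≤ ∑ k, g β k :=
              Finset.single_le_sum (f := fun k => g β k)
                (fun _ _ => Nat.zero_le _) (mem_univ j)
          _ = m := hgsum
      · simp only [hg, hc, if_pos hj]
        omega
  rw [himg, Finset.card_image_of_injective _ hginj]

lemma shift_count_zero (n i m : ℕ) (S : Finset (Fin n)) (hsm : m < S.card * (i + 1)) :
    (((Fintype.piFinset fun _ : Fin n => Finset.range (m + 1)).filter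
        (fun α : Fin n → ℕ => ∑ j, α j = m)).filter
      (fun α => ∀ j ∈ S, i + 1 ≤ α j)) = ∅ := by
  rw [Finset.eq_empty_iff_forall_notMem]
  intro α hα
  simp only [mem_filter, Fintype.mem_piFinset, mem_range, Nat.lt_succ_iff] at hα
  obtain ⟨⟨-, hsum⟩, hge⟩ := hα
  have h1 : S.card * (i + 1) ≤ ∑ j ∈ S, α j := by
    calc S.card * (i + 1) = ∑ _j ∈ S, (i + 1) := by rw [Finset.sum_const, smul_eq_mul]
      _ ≤ ∑ j ∈ S, α j := Finset.sum_le_sum hge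
  have h2 : ∑ j ∈ S, α j ≤ ∑ j, α j :=
    Finset.sum_le_sum_of_subset (Finset.subset_univ S)
  omega

lemma term_eq' (n a b : ℕ) (hn : 1 ≤ n) :
    (if b ≤ a then ((a - b + n - 1).choose (n - 1) : ℤ) else 0)
      = ichoose ((a : ℤ) - b + n - 1) (n - 1) := by
  rw [ichoose]
  by_cases h : b ≤ a
  · rw [if_pos h, if_neg (by omega)]
    have ht : ((a : ℤ) - b + n - 1).toNat = a - b + n - 1 := by omega
    rw [ht]
  · rw [if_neg h, if_pos (by omega)]

/-- The Hilbert function of `𝒱(1,1,…,1; d)` (equivalently, the Ehrhart polynomial of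
the `d`-th hypersimplex): the number of tuples `(α₁,…,αₙ)` of non-negative integers
with `Σ αⱼ = i·d` and `αⱼ ≤ i` for all `j` equals
`Σ_{s=0}^{d−1} (−1)^s C(n, s) C(i(d − s) − s + n − 1, n − 1)`. -/
theorem hilbert_function_hypersimplex
    (n d : ℕ) (hd : 1 ≤ d) (hdn : d < n) (i : ℕ) :
    ((Finset.filter (fun α : Fin n → ℕ => ∑ j, α j = i * d)
        (Fintype.piFinset fun _ => Finset.range (i + 1))).card : ℤ) =
      ∑ s ∈ Finset.range d,
        (-1 : ℤ) ^ s * (n.choose s) *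
          ichoose ((i : ℤ) * ((d : ℤ) - s) - s + n - 1) (n - 1) := by
  classical
  have hn : 1 ≤ n := by omega
  set m := i * d with hm
  set W := (Fintype.piFinset fun _ : Fin n => Finset.range (m + 1)).filter
      (fun α : Fin n → ℕ => ∑ j, α j = m) with hW
  set T : (Fin n → ℕ) → Finset (Fin n) := fun α => univ.filter (fun j => i + 1 ≤ α j) with hT
  set F : ℕ → ℤ := fun s => (-1 : ℤ) ^ s *
      (if s * (i + 1) ≤ m then ((m - s * (i + 1) + n - 1).choose (n - 1) : ℤ) else 0) with hF
  -- Step 1: rewrite the LHS set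
  have step1 : (Finset.filter (fun α : Fin n → ℕ => ∑ j, α j = i * d)
        (Fintype.piFinset fun _ => Finset.range (i + 1)))
      = W.filter (fun α => T α = ∅) := by
    ext α
    simp only [hW, hT, mem_filter, Fintype.mem_piFinset, mem_range, Nat.lt_succ_iff,
      Finset.filter_eq_empty_iff, mem_univ, not_le, Nat.lt_succ_iff, true_implies, ← hm]
    have him : i ≤ m := by rw [hm]; exact Nat.le_mul_of_pos_right i hd
    constructor
    · rintro ⟨h1, h2⟩
      exact ⟨⟨fun j => le_trans (h1 j) him, h2⟩, h1⟩
    · rintro ⟨⟨h1, h2⟩, h3⟩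
      exact ⟨h3, h2⟩
  rw [step1]
  -- Step 2: card as sum of indicators, then powerset expansion
  have step2 : (((W.filter (fun α => T α = ∅)).card : ℤ))
      = ∑ α ∈ W, ∑ S ∈ (T α).powerset, (-1 : ℤ) ^ S.card := by
    rw [Finset.card_filter]
    push_cast
    refine Finset.sum_congr rfl fun α _ => ?_
    rw [Finset.sum_powerset_neg_one_pow_card]
  rw [step2]
  -- Step 3: extend inner sums to the full powerset and swap
  have step3 : (∑ α ∈ W, ∑ S ∈ (T α).powerset, (-1 : ℤ) ^ S.card)
      = ∑ S ∈ (univ : Finset (Fin n)).powerset,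
          (-1 : ℤ) ^ S.card * ((W.filter (fun α => ∀ j ∈ S, i + 1 ≤ α j)).card : ℤ) := by
    have h1 : ∀ α, ∑ S ∈ (T α).powerset, (-1 : ℤ) ^ S.card
        = ∑ S ∈ (univ : Finset (Fin n)).powerset,
            if S ⊆ T α then (-1 : ℤ) ^ S.card else 0 := by
      intro α
      rw [Finset.sum_ite, Finset.sum_const_zero, add_zero]
      apply Finset.sum_congr _ (fun _ _ => rfl)
      ext S
      simp [Finset.mem_powerset]
    simp_rw [h1]
    rw [Finset.sum_comm]
    refine Finset.sum_congr rfl fun S _ => ?_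
    have h2 : ∀ α, (S ⊆ T α) ↔ (∀ j ∈ S, i + 1 ≤ α j) := by
      intro α
      simp [hT, Finset.subset_iff]
    simp_rw [← h2]
    rw [Finset.sum_ite, Finset.sum_const_zero, add_zero, Finset.sum_const, nsmul_eq_mul, mul_comm]
  rw [step3]
  -- Step 4: count terms
  have step4 : ∀ S ∈ (univ : Finset (Fin n)).powerset,
      (-1 : ℤ) ^ S.card * ((W.filter (fun α => ∀ j ∈ S, i + 1 ≤ α j)).card : ℤ)
        = F S.card := by
    intro S _
    rw [hF]
    simp only
    congr 1
    by_cases h : S.card * (i + 1) ≤ m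
    · rw [if_pos h, hW, shift_count n i m S h, stars_bars n (m - S.card * (i + 1)) hn]
    · rw [if_neg h, hW, shift_count_zero n i m S (lt_of_not_ge h)]
      simp
  rw [Finset.sum_congr rfl step4, Finset.sum_powerset_apply_card F, Finset.card_univ,
    Fintype.card_fin]
  -- Step 5: restrict the sum from range (n+1) to range d
  have hrestrict : ∑ s ∈ Finset.range (n + 1), n.choose s • F s
      = ∑ s ∈ Finset.range d, n.choose s • F s := by
    symm
    apply Finset.sum_subset (Finset.range_subset_range.mpr (Nat.le_succ_of_le hdn.le))
    intro s _ hs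
    rw [Finset.mem_range, not_lt] at hs
    have hc : ¬ s * (i + 1) ≤ m := by
      rw [hm]
      intro hle
      nlinarith
    rw [hF]
    simp only
    rw [if_neg hc, mul_zero, smul_zero]
  rw [hrestrict]
  refine Finset.sum_congr rfl fun s hs => ?_
  have key : ((i : ℤ) * ((d : ℤ) - s) - s + n - 1)
      = ((i * d : ℕ) : ℤ) - ((s * (i + 1) : ℕ) : ℤ) + (n : ℤ) - 1 := by push_cast; ring
  rw [key, ← term_eq' n (i * d) (s * (i + 1)) hn, hF]
  simp only [← hm]
  rw [nsmul_eq_mul]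
  ring
end

section
/- Let n, d be positive integers. In the ring of formal power series over ℤ we have the identity (1 − t)^n · Σ_{i≥0} C(n + i·d − 1, n − 1) · t^i = Σ_{j≥0} A^{n,d}_{jd} · t^j; the right-hand side is a polynomial, since A^{n,d}_{jd} = 0 for jd > n(d−1). -/
/-!
Since `(1 - t) (1 + t + ⋯ + t^{d-1}) = 1 - t^d`, the series `Σ_i A^{n,d}_i t^i` equals
`(1 - t^d)^n (1 - t)^{-n}`, and `(1 - t)^{-n} = Σ_i C(n - 1 + i, n - 1) t^i`. Keeping only the
coefficients of `t^{jd}` and renaming `t^d` to `t` commutes with multiplication by a series in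
`t^d`, which turns `(1 - t^d)^n` into `(1 - t)^n` and gives the identity. The vanishing is the
degree bound `deg (1 + t + ⋯ + t^{d-1})^n ≤ n (d - 1)`.
-/

/-- the integers `A^{n,d}_i` defined by `(1 + T + ⋯ + T^{d−1})^n = Σ_i A^{n,d}_i T^i`. -/
noncomputable def A (n d i : ℕ) : ℕ :=
  ((∑ j ∈ Finset.range d, (Polynomial.X : Polynomial ℕ) ^ j) ^ n).coeff i

open Finset

namespace PowerSeries

variable {R : Type*}

/-- The `0`-th `d`-multisection of `F`, with `t^d` renamed to `t`. -/
noncomputable def decimate [Semiring R] (d : ℕ) (F : R⟦X⟧) : R⟦X⟧ :=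
  mk fun j => coeff (j * d) F

section Semiring

variable [Semiring R]

@[simp]
lemma decimate_mk (d : ℕ) (f : ℕ → R) : decimate d (mk f) = mk fun j => f (j * d) := by
  ext j
  simp [decimate]

lemma decimate_X_pow_mul {d : ℕ} (hd : 0 < d) (F : R⟦X⟧) :
    decimate d (X ^ d * F) = X * decimate d F := by
  ext j
  cases j with
  | zero => simp [decimate, coeff_X_pow_mul', hd.ne']
  | succ k => simp [decimate, coeff_X_pow_mul', add_mul]

end Semiring

lemma decimate_sub [Ring R] (d : ℕ) (F G : R⟦X⟧) :
    decimate d (F - G) = decimate d F - decimate d G := by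
  ext j
  simp [decimate]

variable [CommRing R]

lemma decimate_one_sub_X_pow_pow_mul {d : ℕ} (hd : 0 < d) (n : ℕ) (F : R⟦X⟧) :
    decimate d ((1 - X ^ d) ^ n * F) = (1 - X) ^ n * decimate d F := by
  induction n with
  | zero => simp
  | succ n ih =>
    rw [pow_succ', mul_assoc, sub_mul, one_mul, decimate_sub, decimate_X_pow_mul hd, ih]
    ring

lemma one_sub_X_pow_pow_mul_invOneSubPow (d n : ℕ) :
    (1 - X ^ d) ^ n * (invOneSubPow R n : R⟦X⟧) = (∑ j ∈ range d, X ^ j) ^ n := by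
  rw [← mul_neg_geom_sum, mul_pow, mul_comm ((1 - X) ^ n), mul_assoc,
    ← invOneSubPow_inv_eq_one_sub_pow, (invOneSubPow R n).inv_val, mul_one]

end PowerSeries

open PowerSeries

lemma mk_A_eq_geom_sum_pow {R : Type*} [CommSemiring R] (n d : ℕ) :
    mk (fun i => (A n d i : R)) = (∑ j ∈ range d, X ^ j) ^ n := by
  ext i
  have hcoe : ((∑ j ∈ range d, X ^ j) ^ n : R⟦X⟧) =
      (((∑ j ∈ range d, (Polynomial.X : Polynomial ℕ) ^ j) ^ n).map (Nat.castRingHom R) :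
        Polynomial R) := by
    simp only [Polynomial.map_pow, Polynomial.map_sum, Polynomial.map_X,
      ← Polynomial.coeToPowerSeries.ringHom_apply, map_pow, map_sum]
    simp [Polynomial.coeToPowerSeries.ringHom_apply]
  rw [hcoe, Polynomial.coeff_coe, Polynomial.coeff_map, coeff_mk, A]
  rfl

lemma A_eq_zero_of_mul_sub_one_lt {n d i : ℕ} (hi : n * (d - 1) < i) : A n d i = 0 := by
  refine Polynomial.coeff_eq_zero_of_natDegree_lt (Polynomial.natDegree_pow_le.trans_lt ?_)
  refine lt_of_le_of_lt (Nat.mul_le_mul_left n ?_) hi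
  refine Polynomial.natDegree_sum_le_of_forall_le _ _ fun j hj => ?_
  rw [Polynomial.natDegree_X_pow]
  have := mem_range.mp hj
  omega

/-- In `ℤ⟦t⟧` one has `(1 − t)^n · Σ_{i≥0} C(n + i·d − 1, n − 1) t^i = Σ_{j≥0} A^{n,d}_{jd} t^j`;
moreover the right-hand side is a polynomial since `A^{n,d}_{jd} = 0` for `jd > n(d−1)`. -/
theorem generating_function_A
    (n d : ℕ) (hn : 0 < n) (hd : 0 < d) :
    ((1 - PowerSeries.X : PowerSeries ℤ) ^ n *
        PowerSeries.mk (fun i => ((n + i * d - 1).choose (n - 1) : ℤ)) =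
      PowerSeries.mk (fun j => (A n d (j * d) : ℤ))) ∧
    ∀ j : ℕ, n * (d - 1) < j * d → A n d (j * d) = 0 := by
  refine ⟨?_, fun j => A_eq_zero_of_mul_sub_one_lt⟩
  have hchoose : (mk fun i => ((n + i * d - 1).choose (n - 1) : ℤ)) =
      decimate d (invOneSubPow ℤ n : ℤ⟦X⟧) := by
    rw [invOneSubPow_val_eq_mk_sub_one_add_choose_of_pos ℤ n hn, decimate_mk]
    congr! 4
    omega
  rw [hchoose, ← decimate_one_sub_X_pow_pow_mul hd, one_sub_X_pow_pow_mul_invOneSubPow,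
    ← mk_A_eq_geom_sum_pow, decimate_mk]
end

section
/- Let n, d be positive integers. For an integer l ≥ 0 one has A^{n,d}_{ld} ≠ 0 if and only if l ≤ n − ⌈n/d⌉. In particular, the polynomial Σ_{l≥0} A^{n,d}_{ld} t^l has degree exactly n − ⌈n/d⌉ = ⌊n(d−1)/d⌋. -/
open Finset Polynomial

section Semiring

variable {R : Type*} [Semiring R]

theorem Polynomial.coeff_geomSum_X (d i : ℕ) :
    (∑ j ∈ range d, (X : R[X]) ^ j).coeff i = if i < d then 1 else 0 := by
  simp only [finsetSum_coeff, coeff_X_pow, sum_ite_eq, mem_range]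

theorem Polynomial.natDegree_geomSum_X_pow_le (n d : ℕ) :
    ((∑ j ∈ range d, (X : R[X]) ^ j) ^ n).natDegree ≤ n * (d - 1) := by
  refine natDegree_pow_le_of_le n (natDegree_sum_le_of_forall_le _ _ fun j hj => ?_)
  exact (natDegree_X_pow_le j).trans (by grind)

end Semiring

section CanonicallyOrdered

variable {R : Type*} [Semiring R] [PartialOrder R] [CanonicallyOrderedAdd R] [NoZeroDivisors R]

/-- A sum in a canonically ordered semiring vanishes only if every term does, so no cancellation
occurs. -/
theorem Polynomial.coeff_mul_add_ne_zero {p q : R[X]} {a b : ℕ} (ha : p.coeff a ≠ 0)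
    (hb : q.coeff b ≠ 0) : (p * q).coeff (a + b) ≠ 0 := by
  rw [coeff_mul, Ne, sum_eq_zero_iff, not_forall]
  exact ⟨(a, b), by simpa using mul_ne_zero ha hb⟩

theorem Polynomial.coeff_geomSum_X_pow_ne_zero [Nontrivial R] {n d i : ℕ} (hd : 0 < d)
    (hi : i ≤ n * (d - 1)) : ((∑ j ∈ range d, (X : R[X]) ^ j) ^ n).coeff i ≠ 0 := by
  induction n generalizing i with
  | zero => simp_all
  | succ n ih =>
    obtain ⟨a, b, rfl, ha, hb⟩ : ∃ a b, i = a + b ∧ a ≤ n * (d - 1) ∧ b < d :=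
      ⟨i - min i (d - 1), min i (d - 1), by omega, by rw [add_one_mul] at hi; omega, by omega⟩
    rw [pow_succ]
    exact coeff_mul_add_ne_zero (ih ha) (by rw [coeff_geomSum_X, if_pos hb]; exact one_ne_zero)

end CanonicallyOrdered

theorem A_ne_zero_iff {n d i : ℕ} (hd : 0 < d) : A n d i ≠ 0 ↔ i ≤ n * (d - 1) :=
  ⟨fun h => not_lt.mp fun hi => h (coeff_eq_zero_of_natDegree_lt
      ((natDegree_geomSum_X_pow_le n d).trans_lt hi)),
    coeff_geomSum_X_pow_ne_zero hd⟩

theorem natCast_sub_ceil_div_eq_floor {n d : ℕ} (hd : 0 < d) :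
    (n : ℤ) - ⌈(n : ℚ) / d⌉ = ⌊(n : ℚ) * ((d : ℚ) - 1) / d⌋ := by
  have : (n : ℚ) * ((d : ℚ) - 1) / d = -((n : ℚ) / d) + (n : ℤ) := by
    field_simp
    push_cast
    ring
  rw [this, Int.floor_add_intCast, Int.floor_neg]
  ring

theorem floor_mul_pred_div_eq {n d : ℕ} (hd : 0 < d) :
    ⌊(n : ℚ) * ((d : ℚ) - 1) / d⌋ = ((n * (d - 1) / d : ℕ) : ℤ) := by
  rw [show (n : ℚ) * ((d : ℚ) - 1) = ((n * (d - 1) : ℕ) : ℚ) by push_cast [Nat.cast_sub hd]; ring,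
    Rat.floor_natCast_div_natCast, Int.natCast_div]

theorem A_mul_d_ne_zero_iff_general (n d : ℕ) (hd : 0 < d) :
    (∀ l : ℕ, A n d (l * d) ≠ 0 ↔ (l : ℤ) ≤ (n : ℤ) - ⌈(n : ℚ) / (d : ℚ)⌉) ∧
    (n : ℤ) - ⌈(n : ℚ) / (d : ℚ)⌉ = ⌊(n : ℚ) * ((d : ℚ) - 1) / (d : ℚ)⌋ := by
  refine ⟨fun l => ?_, natCast_sub_ceil_div_eq_floor hd⟩
  rw [A_ne_zero_iff hd, natCast_sub_ceil_div_eq_floor hd, floor_mul_pred_div_eq hd, Nat.cast_le,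
    Nat.le_div_iff_mul_le hd]

/-- For `l ≥ 0` one has `A^{n,d}_{ld} ≠ 0` iff `l ≤ n − ⌈n/d⌉`; in particular the
polynomial `Σ_l A^{n,d}_{ld} t^l` has degree exactly `n − ⌈n/d⌉ = ⌊n(d−1)/d⌋`. -/
theorem A_mul_d_ne_zero_iff (n d : ℕ) (hn : 0 < n) (hd : 0 < d) :
    (∀ l : ℕ, A n d (l * d) ≠ 0 ↔ (l : ℤ) ≤ (n : ℤ) - ⌈(n : ℚ) / (d : ℚ)⌉) ∧
    (n : ℤ) - ⌈(n : ℚ) / (d : ℚ)⌉ = ⌊(n : ℚ) * ((d : ℚ) - 1) / (d : ℚ)⌋ :=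
  A_mul_d_ne_zero_iff_general n d hd
end

section
/- Let n, a, b, i be integers with n ≥ 1, a ≥ 0, 0 ≤ b ≤ n − 1, and i ≥ 0. Then (the integer which equals C(a·i − b + n − 1, n − 1) if a·i ≥ b, and 0 otherwise) is equal to Σ_{j=0}^{b} (−1)^j · C(b, j) · C(a·i + n − 1 − j, n − 1 − j). -/
lemma key (m : ℕ) : ∀ (b x : ℕ), b ≤ x →
    (∑ j ∈ Finset.range (b + 1), (-1 : ℤ) ^ j * (b.choose j) * ((x - j).choose m)) =
      if b ≤ m then (((x - b).choose (m - b) : ℕ) : ℤ) else 0 := by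
  intro b
  induction b with
  | zero => intro x hx; simp
  | succ b ih =>
    intro x hx
    have hbx : b ≤ x - 1 := by omega
    have hbx' : b ≤ x := by omega
    -- step: S_{b+1}(x) = S_b(x) - S_b(x-1)
    have hstep : (∑ j ∈ Finset.range (b + 2),
        (-1 : ℤ) ^ j * ((b+1).choose j) * ((x - j).choose m))
        = (∑ j ∈ Finset.range (b + 1), (-1 : ℤ) ^ j * (b.choose j) * ((x - j).choose m))
          - (∑ j ∈ Finset.range (b + 1), (-1 : ℤ) ^ j * (b.choose j) * ((x - 1 - j).choose m)) := by
      have h2 : (∑ j ∈ Finset.range (b + 1),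
          (-1 : ℤ) ^ j * (b.choose (j+1)) * ((x - (j+1)).choose m))
          = ((x.choose m : ℕ) : ℤ)
            - (∑ j ∈ Finset.range (b + 1), (-1 : ℤ) ^ j * (b.choose j) * ((x - j).choose m)) := by
        have := Finset.sum_range_succ'
          (fun j => (-1 : ℤ) ^ j * (b.choose j) * ((x - j).choose m)) (b + 1)
        rw [Finset.sum_range_succ] at this
        simp only [Nat.choose_succ_self, Nat.cast_zero, mul_zero, zero_mul, add_zero,
          pow_zero, one_mul, Nat.choose_zero_right, Nat.cast_one, Nat.sub_zero] at this
        have h3 : ∀ j, (-1:ℤ)^(j+1) * (b.choose (j+1)) * ((x - (j+1)).choose m)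
            = -((-1:ℤ)^j * (b.choose (j+1)) * ((x - (j+1)).choose m)) := by
          intro j; ring
        rw [Finset.sum_congr rfl (fun j _ => h3 j)] at this
        rw [Finset.sum_neg_distrib] at this
        linarith [this]
      rw [Finset.sum_range_succ' (fun j => (-1 : ℤ) ^ j * ((b+1).choose j) * ((x - j).choose m)) (b+1)]
      have h4 : ∀ j, (-1:ℤ)^(j+1) * (((b+1).choose (j+1) : ℕ) : ℤ) * ((x - (j+1)).choose m)
          = -((-1:ℤ)^j * (b.choose j) * ((x - 1 - j).choose m))
            - ((-1:ℤ)^j * (b.choose (j+1)) * ((x - (j+1)).choose m)) := by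
        intro j
        have : x - 1 - j = x - (j+1) := by omega
        rw [this, Nat.choose_succ_succ, Nat.cast_add]
        ring
      rw [Finset.sum_congr rfl (fun j _ => h4 j)]
      rw [Finset.sum_sub_distrib, Finset.sum_neg_distrib, h2]
      simp only [pow_zero, one_mul, Nat.choose_zero_right, Nat.cast_one, Nat.sub_zero]
      ring
    rw [hstep, ih x hbx', ih (x-1) hbx]
    by_cases h : b + 1 ≤ m
    · rw [if_pos h, if_pos (by omega), if_pos (by omega)]
      have : (x - b).choose (m - b) = (x - 1 - b).choose (m - b - 1) + (x - 1 - b).choose (m - b) := by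
        have e1 : x - b = (x - 1 - b) + 1 := by omega
        have e2 : m - b = (m - b - 1) + 1 := by omega
        rw [e1, e2, Nat.choose_succ_succ]
        simp [Nat.succ_eq_add_one]
      have e3 : m - (b+1) = m - b - 1 := by omega
      have e4 : x - (b+1) = x - 1 - b := by omega
      rw [e3, e4, this]
      push_cast
      ring
    · rw [if_neg h]
      by_cases h' : b ≤ m
      · have hbm : b = m := by omega
        rw [if_pos h', if_pos h', hbm]
        simp
      · rw [if_neg h', if_neg h']
        simp

/-- The recursion for the series `P^n_{a,b}`, coefficientwise: for `n ≥ 1`, `0 ≤ b ≤ n − 1`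
and `i ≥ 0`, the integer equal to `C(a·i − b + n − 1, n − 1)` when `a·i ≥ b` and to `0`
otherwise equals `Σ_{j=0}^{b} (−1)^j C(b, j) C(a·i + n − 1 − j, n − 1 − j)`. -/
theorem P_series_recursion (n a b i : ℕ) (hn : 1 ≤ n) (hb : b ≤ n - 1) :
    (if b ≤ a * i then ((a * i - b + n - 1).choose (n - 1) : ℤ) else 0) =
      ∑ j ∈ Finset.range (b + 1),
        (-1 : ℤ) ^ j * (b.choose j) * ((a * i + n - 1 - j).choose (n - 1 - j)) := by
  have hconv : ∀ j ∈ Finset.range (b + 1),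
      (-1 : ℤ) ^ j * (b.choose j) * ((a * i + n - 1 - j).choose (n - 1 - j))
      = (-1 : ℤ) ^ j * (b.choose j) * (((a * i + n - 1) - j).choose (a * i)) := by
    intro j hj
    rw [Finset.mem_range] at hj
    have hjn : j ≤ n - 1 := by omega
    have e : a * i + n - 1 - j = a * i + (n - 1 - j) := by omega
    have h2 : (a * i + (n - 1 - j)).choose (n - 1 - j) = (a * i + (n - 1 - j)).choose (a * i) := by
      exact (Nat.choose_symm_add).symm.trans (by rw [add_comm])
    rw [e, h2]
  rw [Finset.sum_congr rfl hconv, key (a * i) b (a * i + n - 1) (by omega)]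
  by_cases h : b ≤ a * i
  · rw [if_pos h, if_pos h]
    have e1 : a * i - b + n - 1 = a * i + n - 1 - b := by omega
    rw [e1]
    congr 1
    conv_rhs => rw [show a * i - b = (a * i + n - 1 - b) - (n - 1) by omega]
    exact (Nat.choose_symm (by omega)).symm
  · rw [if_neg h, if_neg h]
end

section
/- Let n ≥ 2 and d ≥ 1 be integers and let a_1 ≤ … ≤ a_n be integers with 1 ≤ a_i ≤ d for all i and a_1 + … + a_n > d. For i ≥ 0 let H(i) be the number of tuples (α_1,…,α_n) of non-negative integers with α_1 + … + α_n = i·d and α_j ≤ i·a_j for all j. Then (n−1)! · H(i) / i^{n−1} converges, as i → ∞, to Σ_{S ∈ 𝒮} (−1)^{|S|} (d − ΣS)^{n−1}. (This limit is the multiplicity of the Veronese-type algebra 𝒱(a_1,…,a_n; d).) -/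
/-!
Write `H(i)` as the number of `α ∈ ℕⁿ` with `Σ α = i d` and `α ≤ i a` componentwise, and apply
inclusion–exclusion over the set `S` of coordinates where the bound is violated. Forcing
`αⱼ > i aⱼ` for `j ∈ S` and subtracting these lower bounds leaves the unconstrained tuples of total
`m = i (d − ΣS) − |S|`, counted by the stars-and-bars binomial `(m + n − 1).choose (n − 1)`.
This term vanishes for `i ≥ 1` once `ΣS ≥ d`; otherwise it grows like `(i (d − ΣS))^{n−1} / (n−1)!`.
-/

open Finset Filter Topology
open scoped Nat

theorem tendsto_factorial_mul_add_choose_div_pow {m : ℕ → ℕ} {c : ℝ}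
    (hm : Tendsto (fun i => (m i : ℝ) / i) atTop (𝓝 c)) (k : ℕ) :
    Tendsto (fun i => (k ! * (m i + k).choose k : ℝ) / (i : ℝ) ^ k) atTop (𝓝 (c ^ k)) := by
  have hprod (i : ℕ) : (k ! * (m i + k).choose k : ℝ) / (i : ℝ) ^ k =
      ∏ t ∈ range k, ((m i : ℝ) / i + (1 + t) / i) := by
    rw [← Nat.cast_mul, ← Nat.ascFactorial_eq_factorial_mul_choose, Nat.ascFactorial_eq_prod_range,
      Nat.cast_prod, ← card_range k, ← prod_const, card_range, ← prod_div_distrib]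
    refine prod_congr rfl fun t _ => ?_
    push_cast
    ring
  rw [funext hprod, ← card_range k, ← prod_const, card_range]
  refine tendsto_finsetProd _ fun t _ => ?_
  simpa using hm.add (tendsto_const_div_atTop_nhds_zero_nat ((1 : ℝ) + t))

theorem tendsto_natCast_mul_sub_div (c s : ℕ) :
    Tendsto (fun i : ℕ => ((i * c - s : ℕ) : ℝ) / i) atTop (𝓝 c) := by
  rcases c.eq_zero_or_pos with rfl | hc
  · simp
  have hlim : Tendsto (fun i : ℕ => (c : ℝ) - s / (i : ℝ)) atTop (𝓝 c) := by
    simpa using tendsto_const_nhds.sub (tendsto_const_div_atTop_nhds_zero_nat (s : ℝ))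
  refine hlim.congr' ?_
  filter_upwards [eventually_ge_atTop (max s 1)] with i hi
  have hi0 : (i : ℝ) ≠ 0 := Nat.cast_ne_zero.2 (by omega)
  rw [Nat.cast_sub (by nlinarith [le_of_max_le_left hi])]
  push_cast
  field_simp

namespace Finset

variable {ι : Type*} [Fintype ι] [DecidableEq ι]

-- The second instance argument lets this match filters over `Fin n`, where `∀ j` is decided by
-- `Nat.decidableForallFin` rather than by the `Fintype` instance.
theorem card_filter_forall_not_eq_sum_powerset {X : Type*} (s : Finset X) (P : ι → X → Prop)
    [∀ j, DecidablePred (P j)] [DecidablePred fun x => ∀ j, ¬P j x] :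
    (#{x ∈ s | ∀ j, ¬P j x} : ℤ) =
      ∑ T ∈ univ.powerset, (-1 : ℤ) ^ #T * #{x ∈ s | ∀ j ∈ T, P j x} := by
  have hx (x : X) : (if ∀ j, ¬P j x then 1 else 0 : ℤ) =
      ∑ T ∈ univ.powerset, if ∀ j ∈ T, P j x then (-1) ^ #T else 0 := by
    have : {T ∈ (univ : Finset ι).powerset | ∀ j ∈ T, P j x} =
        ({j | P j x} : Finset ι).powerset := by
      ext T
      simp [subset_iff]
    rw [← sum_filter, this, sum_powerset_neg_one_pow_card]
    simp [filter_eq_empty_iff]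
  calc (#{x ∈ s | ∀ j, ¬P j x} : ℤ)
      = ∑ x ∈ s, ∑ T ∈ univ.powerset, if ∀ j ∈ T, P j x then (-1) ^ #T else 0 := by
        rw [card_filter]
        push_cast
        exact sum_congr rfl fun x _ => hx x
    _ = ∑ T ∈ univ.powerset, (-1 : ℤ) ^ #T * #{x ∈ s | ∀ j ∈ T, P j x} := by
        rw [sum_comm]
        refine sum_congr rfl fun T _ => ?_
        rw [← sum_filter, sum_const, nsmul_eq_mul, mul_comm]

theorem card_piAntidiag_univ (M : ℕ) :
    #(piAntidiag (univ : Finset ι) M) = (Fintype.card ι + M - 1).choose M := by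
  rw [← map_sym_eq_piAntidiag, card_map, sym_univ, card_univ, Sym.card_sym_eq_choose]

theorem filter_piAntidiag_univ_forall_le_eq_map {e : ι → ℕ} {M : ℕ} (h : ∑ j, e j ≤ M) :
    {α ∈ piAntidiag (univ : Finset ι) M | ∀ j, e j ≤ α j} =
      (piAntidiag univ (M - ∑ j, e j)).map (addLeftEmbedding e) := by
  ext α
  simp only [mem_filter, mem_piAntidiag, mem_univ, implies_true, and_true, mem_map,
    addLeftEmbedding_apply]
  constructor
  · rintro ⟨hα, he⟩
    refine ⟨α - e, ?_, add_tsub_cancel_of_le he⟩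
    rw [Pi.sub_def, sum_tsub_distrib _ fun j _ => he j, hα]
  · rintro ⟨β, hβ, rfl⟩
    rw [Pi.add_def, sum_add_distrib, hβ, add_tsub_cancel_of_le h]
    exact ⟨rfl, fun j => Nat.le_add_right _ _⟩

theorem filter_piAntidiag_univ_forall_le_eq_empty {e : ι → ℕ} {M : ℕ} (h : M < ∑ j, e j) :
    {α ∈ piAntidiag (univ : Finset ι) M | ∀ j, e j ≤ α j} = ∅ := by
  refine filter_eq_empty_iff.2 fun α hα he => h.not_ge ?_
  rw [mem_piAntidiag] at hα
  exact hα.1 ▸ sum_le_sum fun j _ => he j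

theorem tendsto_card_filter_lt_piAntidiag_div_pow {k d : ℕ} (hk : Fintype.card ι = k + 1)
    (hd : 0 < d) (a : ι → ℕ) (S : Finset ι) :
    Tendsto (fun i : ℕ =>
        (k ! * #{α ∈ piAntidiag (univ : Finset ι) (i * d) | ∀ j ∈ S, i * a j < α j} : ℝ) /
          (i : ℝ) ^ k) atTop
      (𝓝 (if ∑ j ∈ S, a j < d then ((d : ℝ) - ∑ j ∈ S, (a j : ℝ)) ^ k else 0)) := by
  set e : ℕ → ι → ℕ := fun i j => if j ∈ S then i * a j + 1 else 0
  have hfilter (i : ℕ) : {α ∈ piAntidiag (univ : Finset ι) (i * d) | ∀ j ∈ S, i * a j < α j} =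
      {α ∈ piAntidiag (univ : Finset ι) (i * d) | ∀ j, e i j ≤ α j} := by
    refine filter_congr fun α _ => forall_congr' fun j => ?_
    by_cases hj : j ∈ S <;> simp [e, hj]
  have hsum (i : ℕ) : ∑ j, e i j = i * ∑ j ∈ S, a j + #S := by
    simp [e, sum_add_distrib, mul_sum]
  simp_rw [hfilter]
  split_ifs with hS
  · have hle (i : ℕ) (hi : #S ≤ i) : ∑ j, e i j ≤ i * d := by
      rw [hsum]
      nlinarith
    have hm : Tendsto (fun i => ((i * d - ∑ j, e i j : ℕ) : ℝ) / i) atTop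
        (𝓝 ((d : ℝ) - ∑ j ∈ S, (a j : ℝ))) := by
      have h := tendsto_natCast_mul_sub_div (d - ∑ j ∈ S, a j) #S
      rw [Nat.cast_sub hS.le, Nat.cast_sum] at h
      refine h.congr fun i => ?_
      rw [hsum, Nat.mul_sub, Nat.sub_add_eq]
    refine (tendsto_factorial_mul_add_choose_div_pow hm k).congr' ?_
    filter_upwards [eventually_ge_atTop #S] with i hi
    rw [filter_piAntidiag_univ_forall_le_eq_map (hle i hi), card_map, card_piAntidiag_univ, hk,
      show k + 1 + (i * d - ∑ j, e i j) - 1 = (i * d - ∑ j, e i j) + k by omega,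
      Nat.choose_symm_add]
  · have hS : S.Nonempty := nonempty_iff_ne_empty.2 fun h => by simp [h] at hS; omega
    refine tendsto_const_nhds.congr' ?_
    filter_upwards [eventually_ge_atTop 1] with i hi
    have hlt : i * d < ∑ j, e i j := by
      rw [hsum]
      nlinarith [hS.card_pos]
    rw [filter_piAntidiag_univ_forall_le_eq_empty hlt, card_empty, Nat.cast_zero, mul_zero,
      zero_div]

end Finset

theorem multiplicity_veronese_type_general
    (n d : ℕ) (hn : 2 ≤ n) (hd : 0 < d) (a : Fin n → ℕ) :
    Filter.Tendsto
      (fun i : ℕ =>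
        (((n - 1).factorial : ℝ) *
            ((Finset.filter (fun α : Fin n → ℕ => ∑ j, α j = i * d)
                (Fintype.piFinset fun j => Finset.range (i * a j + 1))).card : ℝ)) /
          (i : ℝ) ^ (n - 1))
      Filter.atTop
      (nhds (∑ S ∈ Finset.univ.powerset.filter (fun S : Finset (Fin n) => ∑ j ∈ S, a j < d),
        (-1 : ℝ) ^ S.card * ((d : ℝ) - ∑ j ∈ S, (a j : ℝ)) ^ (n - 1))) := by
  obtain ⟨k, rfl⟩ : ∃ k, n = k + 1 := ⟨n - 1, by omega⟩
  have hlim := tendsto_finsetSum univ.powerset fun S _ =>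
    (tendsto_card_filter_lt_piAntidiag_div_pow (Fintype.card_fin _) hd a S).const_mul
      ((-1 : ℝ) ^ #S)
  rw [Nat.add_sub_cancel, sum_filter]
  simp only [mul_ite, mul_zero] at hlim
  refine hlim.congr fun i => ?_
  have hbox : {α ∈ Fintype.piFinset fun j => range (i * a j + 1) | ∑ j, α j = i * d} =
      {α ∈ piAntidiag (univ : Finset (Fin (k + 1))) (i * d) | ∀ j, ¬i * a j < α j} := by
    ext α
    simp [mem_piAntidiag, and_comm]
  have hcount := congrArg (Int.cast : ℤ → ℝ) <|
    card_filter_forall_not_eq_sum_powerset (piAntidiag univ (i * d)) fun j α => i * a j < α j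
  push_cast at hcount
  rw [hbox, hcount, mul_sum, sum_div]
  refine sum_congr rfl fun S _ => ?_
  ring

/-- The multiplicity of the Veronese-type algebra `𝒱(a₁,…,aₙ; d)`: with `H(i)` the number
of tuples `(α₁,…,αₙ)` of non-negative integers with `Σ αⱼ = i·d` and `αⱼ ≤ i·aⱼ`,
the quantity `(n−1)! · H(i) / i^{n−1}` converges, as `i → ∞`, to
`Σ_{S ∈ 𝒮} (−1)^{|S|} (d − ΣS)^{n−1}`. -/
theorem multiplicity_veronese_type
    (n d : ℕ) (hn : 2 ≤ n) (hd : 0 < d) (a : Fin n → ℕ)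
    (hmono : Monotone a) (h1 : ∀ j, 1 ≤ a j) (hle : ∀ j, a j ≤ d)
    (hsum : d < ∑ j, a j) :
    Filter.Tendsto
      (fun i : ℕ =>
        (((n - 1).factorial : ℝ) *
            ((Finset.filter (fun α : Fin n → ℕ => ∑ j, α j = i * d)
                (Fintype.piFinset fun j => Finset.range (i * a j + 1))).card : ℝ)) /
          (i : ℝ) ^ (n - 1))
      Filter.atTop
      (nhds (∑ S ∈ Finset.univ.powerset.filter (fun S : Finset (Fin n) => ∑ j ∈ S, a j < d),
        (-1 : ℝ) ^ S.card * ((d : ℝ) - ∑ j ∈ S, (a j : ℝ)) ^ (n - 1))) :=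
  multiplicity_veronese_type_general n d hn hd a
end

section
/- Let n ≥ d ≥ 1 be integers and let a_1 ≤ … ≤ a_n be integers with 1 ≤ a_i ≤ d for all i and a_1 + … + a_n > d. For i ≥ 0 let H(i) be the number of tuples (α_1,…,α_n) of non-negative integers with α_1 + … + α_n = i·d and α_j ≤ i·a_j for all j. Then the formal power series (1 − t)^n · Σ_{i≥0} H(i) t^i over ℤ is a polynomial of degree at most n − ⌈n/d⌉; equivalently, its coefficient of t^m vanishes for every m > n − ⌈n/d⌉. (Hence the a-invariant of 𝒱(a_1,…,a_n; d), i.e. the degree of its Hilbert series as a rational function, is at most −⌈n/d⌉.) -/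
/-!
By inclusion–exclusion over the set `T` of coordinates with `α j > i * a j`, `H(i)` is the
alternating sum of the counts `g_T(i)` of tuples with `∑ α = i * d` and `α j > i * a j` on `T`.
With `σ = ∑_{j ∈ T} a j` and `t = #T ≤ σ`, stars and bars gives `g_T = 0` when `σ ≥ d`, and
otherwise `(n - 1)! * g_T(i) = (i * (d - σ) + n - 1 - t).descFactorial (n - 1)` for every
`i ≥ 0`, a polynomial `P` of degree `n - 1` in `i`. The coefficient of `t^m` in `(1 - t)^n ∑ P(i) t^i` is
`∑_{k ≤ m} (-1)^k C(n,k) P(m - k)`, which differs from the `n`-th finite difference of `P`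
(zero) only by the values `P(-w)` for `0 < w ≤ n - m`. As `w < ⌈n / d⌉`, we get
`w * (d - σ) + t < n`, so `P(-w)` is a falling factorial of a number below `n - 1`: zero.
-/

open Finset

namespace Finset

theorem card_filter_forall_not_eq_sum {α ι : Type*} [Fintype ι]
    (s : Finset α) (p : ι → α → Prop) [∀ i, DecidablePred (p i)] :
    (#{x ∈ s | ∀ i, ¬ p i x} : ℤ) =
      ∑ T : Finset ι, (-1 : ℤ) ^ #T * #{x ∈ s | ∀ i ∈ T, p i x} := by
  classical
  simp_rw [card_filter, Nat.cast_sum, mul_sum]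
  rw [sum_comm]
  refine sum_congr rfl fun x _ => ?_
  have hsub (T : Finset ι) : (∀ i ∈ T, p i x) ↔ T ∈ (univ.filter (p · x)).powerset := by
    simp [subset_iff]
  simp_rw [hsub, Nat.cast_ite, Nat.cast_one, Nat.cast_zero, mul_ite, mul_one, mul_zero,
    ← sum_filter, filter_univ_mem, sum_powerset_neg_one_pow_card, filter_eq_empty_iff]
  simp

namespace Nat

theorem card_antidiagonalTuple_succ (k N : ℕ) :
    #(antidiagonalTuple (k + 1) N) = (N + k).choose k := by
  classical
  rw [← piAntidiag_univ_fin_eq_antidiagonalTuple, ← map_sym_eq_piAntidiag, card_map, sym_univ,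
    card_univ, Sym.card_sym_eq_choose, Fintype.card_fin, show k + 1 + N - 1 = N + k by omega,
    Nat.choose_symm_add]

theorem card_antidiagonalTuple_sub_mul_factorial {n t : ℕ} (N : ℕ) (ht : t < n) :
    (if t ≤ N then #(antidiagonalTuple n (N - t)) else 0) * (n - 1).factorial =
      (N + (n - 1 - t)).descFactorial (n - 1) := by
  obtain ⟨k, rfl⟩ : ∃ k, n = k + 1 := ⟨n - 1, by omega⟩
  rw [Nat.add_sub_cancel]
  split_ifs with htN
  · rw [card_antidiagonalTuple_succ, Nat.descFactorial_eq_factorial_mul_choose, mul_comm,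
      show N - t + k = N + (k - t) by omega]
  · rw [zero_mul, eq_comm, Nat.descFactorial_eq_zero_iff_lt]
    omega

theorem card_filter_le_antidiagonalTuple (k N : ℕ) (δ : Fin k → ℕ) :
    #{f ∈ antidiagonalTuple k N | ∀ j, δ j ≤ f j} =
      if ∑ j, δ j ≤ N then #(antidiagonalTuple k (N - ∑ j, δ j)) else 0 := by
  split_ifs with h
  · refine card_nbij' (· - δ) (· + δ) ?_ ?_ ?_ ?_
    · intro f hf
      simp only [coe_filter, mem_antidiagonalTuple] at hf
      simp only [mem_coe, mem_antidiagonalTuple, Pi.sub_apply]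
      rw [sum_tsub_distrib _ fun j _ => hf.2 j, hf.1]
    · intro g hg
      simp only [mem_coe, mem_antidiagonalTuple] at hg
      simp only [coe_filter, Set.mem_ofPred_eq, mem_antidiagonalTuple, Pi.add_apply]
      refine ⟨?_, fun j => le_add_self⟩
      rw [sum_add_distrib, hg, tsub_add_cancel_of_le h]
    · intro f hf
      simp only [coe_filter] at hf
      exact tsub_add_cancel_of_le hf.2
    · intro g _
      exact add_tsub_cancel_right g δ
  · rw [card_eq_zero, filter_eq_empty_iff]
    intro f hf hδ
    rw [mem_antidiagonalTuple] at hf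
    exact h (hf ▸ sum_le_sum fun j _ => hδ j)

theorem card_filter_forall_lt_antidiagonalTuple (k N : ℕ) (c : Fin k → ℕ)
    (T : Finset (Fin k)) :
    #{f ∈ antidiagonalTuple k N | ∀ j ∈ T, c j < f j} =
      if ∑ j ∈ T, (c j + 1) ≤ N then #(antidiagonalTuple k (N - ∑ j ∈ T, (c j + 1)))
      else 0 := by
  have h := card_filter_le_antidiagonalTuple k N fun j => if j ∈ T then c j + 1 else 0
  rw [sum_ite_mem, univ_inter] at h
  rw [← h]
  congr 2 with f
  refine ⟨fun hf j => ?_, fun hf j hj => ?_⟩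
  · split_ifs with hj
    · exact hf j hj
    · exact Nat.zero_le _
  · simpa [hj] using hf j

end Nat

theorem card_filter_piFinset_range_sum_eq (k N : ℕ) (c : Fin k → ℕ) :
    (#{α ∈ Fintype.piFinset fun j => range (c j + 1) | ∑ j, α j = N} : ℤ) =
      ∑ T : Finset (Fin k),
        (-1 : ℤ) ^ #T * #{f ∈ Nat.antidiagonalTuple k N | ∀ j ∈ T, c j < f j} := by
  have h : {α ∈ Fintype.piFinset fun j => range (c j + 1) | ∑ j, α j = N} =
      {f ∈ Nat.antidiagonalTuple k N | ∀ j, ¬ c j < f j} := by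
    ext α
    simp [Nat.mem_antidiagonalTuple, and_comm]
  rw [h]
  convert card_filter_forall_not_eq_sum (Nat.antidiagonalTuple k N) fun j f => c j < f j

end Finset

namespace Polynomial

theorem sum_range_neg_one_pow_mul_choose_mul_eval_sub_eq_zero {R : Type*} [CommRing R]
    {n : ℕ} {P : R[X]} (hP : P.natDegree < n) (y : R) :
    ∑ k ∈ range (n + 1), (-1) ^ k * n.choose k * P.eval (y - k) = 0 := by
  have h := congrFun (fwdDiff_iter_eq_zero_of_degree_lt hP) (y - n)
  rw [fwdDiff_iter_eq_sum_shift, ← sum_range_reflect, Pi.zero_apply] at h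
  rw [← h]
  refine sum_congr rfl fun k hk => ?_
  have hkn : k ≤ n := mem_range_succ_iff.mp hk
  rw [Nat.add_sub_cancel, Nat.sub_sub_self hkn, Nat.choose_symm hkn, nsmul_one,
    Nat.cast_sub hkn, zsmul_eq_mul]
  push_cast
  rw [show y - n + (n - k) = y - k by ring]

theorem natDegree_descPochhammer_comp_linear_le (k b c : ℕ) :
    ((descPochhammer ℤ k).comp (C (b : ℤ) * X + C (c : ℤ))).natDegree ≤ k := by
  refine natDegree_comp_le.trans ?_
  rw [descPochhammer_natDegree]
  exact (Nat.mul_le_mul_left k natDegree_linear_le).trans (mul_one k).le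

theorem eval_descPochhammer_comp_linear_natCast (k b c i : ℕ) :
    ((descPochhammer ℤ k).comp (C (b : ℤ) * X + C (c : ℤ))).eval (i : ℤ) =
      ((i * b + c).descFactorial k : ℤ) := by
  rw [eval_comp, ← descPochhammer_eval_eq_descFactorial]
  simp [mul_comm]

theorem eval_descPochhammer_comp_linear_neg (k b c w : ℕ) (hle : w * b ≤ c)
    (hlt : c < w * b + k) :
    ((descPochhammer ℤ k).comp (C (b : ℤ) * X + C (c : ℤ))).eval (-(w : ℤ)) = 0 := by
  have h : (b : ℤ) * -(w : ℤ) + c = ((c - w * b : ℕ) : ℤ) := by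
    push_cast [Nat.cast_sub hle]; ring
  rw [eval_comp]
  simp only [eval_add, eval_mul, eval_C, eval_X, h, descPochhammer_eval_eq_descFactorial,
    Nat.cast_eq_zero, Nat.descFactorial_eq_zero_iff_lt]
  omega

end Polynomial

theorem mul_add_lt_of_lt_ceil_div {n d w b t : ℕ} (hw0 : 0 < w)
    (hw : (w : ℤ) < ⌈(n : ℚ) / d⌉) (hbt : b + t ≤ d) : w * b + t < n := by
  have hwd : w * d < n := by
    rw [Int.lt_ceil] at hw
    rcases Nat.eq_zero_or_pos d with rfl | hd
    · simp only [Nat.cast_zero, div_zero] at hw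
      exact absurd hw (not_lt.mpr (Nat.cast_nonneg w))
    · rw [Int.cast_natCast, lt_div_iff₀ (by exact_mod_cast hd)] at hw
      exact_mod_cast hw
  calc w * b + t ≤ w * (b + t) := by nlinarith
    _ ≤ w * d := Nat.mul_le_mul_left w hbt
    _ < n := hwd

namespace PowerSeries

variable {R : Type*} [CommRing R]

theorem coeff_one_sub_X_pow (n k : ℕ) :
    coeff k ((1 - X : R⟦X⟧) ^ n) = (-1) ^ k * n.choose k := by
  have h : (1 - X : R⟦X⟧) ^ n =
      rescale (-1) (((1 + Polynomial.X) ^ n : Polynomial R) : R⟦X⟧) := by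
    simp [sub_eq_add_neg]
  rw [h, coeff_rescale, Polynomial.coeff_coe, Polynomial.coeff_one_add_X_pow]

theorem coeff_one_sub_X_pow_mul (n m : ℕ) (φ : R⟦X⟧) :
    coeff m ((1 - X) ^ n * φ) =
      ∑ k ∈ range (m + 1), (-1) ^ k * n.choose k * coeff (m - k) φ := by
  simp_rw [coeff_mul, Nat.sum_antidiagonal_eq_sum_range_succ_mk, coeff_one_sub_X_pow]

theorem coeff_one_sub_X_pow_mul_mk_eval_eq_zero {n m : ℕ} {P : Polynomial R}
    (hP : P.natDegree < n)
    (hvanish : ∀ w : ℕ, 0 < w → m + w ≤ n → P.eval (-(w : R)) = 0) :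
    coeff m ((1 - X) ^ n * mk fun i => P.eval (i : R)) = 0 := by
  set F : ℕ → R := fun k => (-1) ^ k * n.choose k * P.eval ((m : R) - k)
  have hF : ∀ k > m, F k = 0 := by
    intro k hk
    by_cases hkn : k ≤ n
    · obtain ⟨w, hw, rfl⟩ : ∃ w, 0 < w ∧ k = m + w := ⟨k - m, by omega, by omega⟩
      simp only [F, Nat.cast_add, sub_add_cancel_left, hvanish w hw hkn, mul_zero]
    · simp [F, Nat.choose_eq_zero_of_lt (not_le.mp hkn)]
  calc coeff m ((1 - X) ^ n * mk fun i => P.eval (i : R))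
      = ∑ k ∈ range (m + 1), F k := by
        rw [coeff_one_sub_X_pow_mul]
        refine sum_congr rfl fun k hk => ?_
        rw [coeff_mk, Nat.cast_sub (mem_range_succ_iff.mp hk)]
    _ = ∑ k ∈ range (m + n + 1), F k := (eventually_constant_sum hF (by omega)).symm
    _ = ∑ k ∈ range (n + 1), F k := by
        refine eventually_constant_sum (fun k hk => ?_) (by omega)
        simp [F, Nat.choose_eq_zero_of_lt (Nat.lt_of_succ_le hk)]
    _ = 0 := P.sum_range_neg_one_pow_mul_choose_mul_eval_sub_eq_zero hP m

theorem coeff_one_sub_X_pow_mul_mk_descFactorial_eq_zero {n m k b c : ℕ} (hk : k < n)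
    (hvanish : ∀ w, 0 < w → m + w ≤ n → w * b ≤ c ∧ c < w * b + k) :
    coeff m ((1 - X) ^ n * mk fun i => ((i * b + c).descFactorial k : ℤ)) = 0 := by
  simp_rw [← Polynomial.eval_descPochhammer_comp_linear_natCast]
  exact coeff_one_sub_X_pow_mul_mk_eval_eq_zero
    ((Polynomial.natDegree_descPochhammer_comp_linear_le k b c).trans_lt hk) fun w hw hwn =>
      Polynomial.eval_descPochhammer_comp_linear_neg k b c w (hvanish w hw hwn).1
        (hvanish w hw hwn).2

theorem coeff_one_sub_X_pow_mul_mk_card_filter_eq_zero {n d m : ℕ} {a : Fin n → ℕ}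
    (T : Finset (Fin n)) (hd : 0 < d) (hdn : d ≤ n) (h1 : ∀ j, 1 ≤ a j)
    (hm : (n : ℤ) - ⌈(n : ℚ) / d⌉ < m) :
    coeff m ((1 - X) ^ n *
      mk fun i => (#{f ∈ Nat.antidiagonalTuple n (i * d) | ∀ j ∈ T, i * a j < f j} : ℤ)) =
      0 := by
  set σ := ∑ j ∈ T, a j
  have htσ : #T ≤ σ := by simpa using T.card_nsmul_le_sum a 1 fun j _ => h1 j
  have hsum (i : ℕ) : ∑ j ∈ T, (i * a j + 1) = i * σ + #T := by
    rw [sum_add_distrib, ← mul_sum, card_eq_sum_ones]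
  simp_rw [Nat.card_filter_forall_lt_antidiagonalTuple, hsum]
  by_cases hσ : σ < d
  · have hcond (i : ℕ) : i * σ + #T ≤ i * d ↔ #T ≤ i * (d - σ) := by
      rw [Nat.mul_sub]; have := Nat.mul_le_mul_left i hσ.le; omega
    have hdiff (i : ℕ) : i * d - (i * σ + #T) = i * (d - σ) - #T := by
      rw [Nat.mul_sub]; omega
    simp_rw [hcond, hdiff]
    have hvanish := coeff_one_sub_X_pow_mul_mk_descFactorial_eq_zero (n := n) (m := m)
      (k := n - 1) (b := d - σ) (c := n - 1 - #T) (by omega) fun w hw hwn => by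
        have := mul_add_lt_of_lt_ceil_div (n := n) (d := d) hw (by omega)
          (show d - σ + #T ≤ d by omega)
        have := Nat.mul_le_mul_left w (show 1 ≤ d - σ by omega)
        omega
    simp_rw [← Nat.card_antidiagonalTuple_sub_mul_factorial _ (show #T < n by omega),
      Nat.cast_mul] at hvanish
    rw [← mul_eq_zero_iff_right (Nat.cast_ne_zero.mpr (n - 1).factorial_ne_zero), ← coeff_mul_C,
      mul_assoc]
    convert hvanish using 3
    ext i
    rw [coeff_mul_C, coeff_mk, coeff_mk]
  · have hT : T.Nonempty := by
      rw [nonempty_iff_ne_empty]; rintro rfl; simp [σ] at hσ; omega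
    have hne (i : ℕ) : ¬ i * σ + #T ≤ i * d := by
      have := Nat.mul_le_mul_left i (not_lt.mp hσ); have := hT.card_pos; omega
    have h0 : (mk fun _ => (0 : ℤ)) = 0 := by ext; simp
    simp only [hne, if_false, Nat.cast_zero, h0, mul_zero, map_zero]

end PowerSeries

theorem a_invariant_bound_veronese_type_general
    (n d : ℕ) (hd : 0 < d) (hdn : d ≤ n) (a : Fin n → ℕ)
    (h1 : ∀ j, 1 ≤ a j)
    (m : ℕ) (hm : (n : ℤ) - ⌈(n : ℚ) / (d : ℚ)⌉ < (m : ℤ)) :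
    PowerSeries.coeff (R := ℤ) m
      ((1 - PowerSeries.X : PowerSeries ℤ) ^ n *
        PowerSeries.mk (fun i =>
          ((Finset.filter (fun α : Fin n → ℕ => ∑ j, α j = i * d)
              (Fintype.piFinset fun j => Finset.range (i * a j + 1))).card : ℤ))) = 0 := by
  have hH : (PowerSeries.mk fun i =>
        (#{α ∈ Fintype.piFinset fun j => range (i * a j + 1) | ∑ j, α j = i * d} : ℤ)) =
      ∑ T : Finset (Fin n), (-1 : ℤ) ^ #T •
        PowerSeries.mk fun i =>
          (#{f ∈ Nat.antidiagonalTuple n (i * d) | ∀ j ∈ T, i * a j < f j} : ℤ) := by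
    ext i
    simp_rw [PowerSeries.coeff_mk, card_filter_piFinset_range_sum_eq, map_sum, map_zsmul,
      PowerSeries.coeff_mk, smul_eq_mul]
  rw [hH, mul_sum, map_sum]
  refine sum_eq_zero fun T _ => ?_
  rw [mul_smul_comm, map_zsmul,
    PowerSeries.coeff_one_sub_X_pow_mul_mk_card_filter_eq_zero T hd hdn h1 hm, smul_zero]

/-- Bound on the a-invariant of the Veronese-type algebra `𝒱(a₁,…,aₙ; d)` for `n ≥ d`:
with `H(i)` the number of tuples `(α₁,…,αₙ)` of non-negative integers with
`Σ αⱼ = i·d` and `αⱼ ≤ i·aⱼ`, the power series `(1 − t)^n · Σ_{i≥0} H(i) t^i` over `ℤ`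
is a polynomial of degree at most `n − ⌈n/d⌉`: its coefficient of `t^m` vanishes for
every `m > n − ⌈n/d⌉`. -/
theorem a_invariant_bound_veronese_type
    (n d : ℕ) (hd : 0 < d) (hdn : d ≤ n) (a : Fin n → ℕ)
    (hmono : Monotone a) (h1 : ∀ j, 1 ≤ a j) (hle : ∀ j, a j ≤ d)
    (hsum : d < ∑ j, a j)
    (m : ℕ) (hm : (n : ℤ) - ⌈(n : ℚ) / (d : ℚ)⌉ < (m : ℤ)) :
    PowerSeries.coeff (R := ℤ) m
      ((1 - PowerSeries.X : PowerSeries ℤ) ^ n *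
        PowerSeries.mk (fun i =>
          ((Finset.filter (fun α : Fin n → ℕ => ∑ j, α j = i * d)
              (Fintype.piFinset fun j => Finset.range (i * a j + 1))).card : ℤ))) = 0 :=
  a_invariant_bound_veronese_type_general n d hd hdn a h1 m hm
end
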